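/- Let K be a field and let A and A' be the two-dimensional algebras over K with bases {e₁, e₂} and {e'₁, e'₂} whose nonzero basis products are, respectively, e₁e₁ = e₁, e₁e₂ = e₂ = e₂e₁ (and e₂e₂ = 0), and e'₁e'₁ = e'₁ = e'₂e'₂, e'₁e'₂ = e'₂ = e'₂e'₁. If the characteristic of K is 2, then A and A' are isomorphic; indeed the linear map f with f(e₁) = e'₁ and f(e₂) = e'₁ + e'₂ is an isomorphism. If the characteristic of K is not 2, then A and A' are not isotopic. -/

import Mathlib

/-!
In characteristic 2 the shear `e₂ ↦ e'₁ + e'₂` is multiplicative, because the only defect is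
twice the product of the `e₂`-coordinates. Otherwise `e'₁ + e'₂` and `e'₁ - e'₂` are linearly independent and
annihilate each other in `A'`, so an isotopism `(f, g, h)` would pull them back under `f` to two
linearly independent left zero divisors of `A`; but in `A`, `u w = 0` with `w ≠ 0` forces `u` onto
the line `K e₂`.
-/

/-- The two-dimensional algebra `A` over `K` with nonzero basis products
`e₁e₁ = e₁`, `e₁e₂ = e₂ = e₂e₁` (and `e₂e₂ = 0`), realized on `Fin 2 → K`. -/
def mulA (K : Type*) [Field K] (x y : Fin 2 → K) : Fin 2 → K :=
  ![x 0 * y 0, x 0 * y 1 + x 1 * y 0]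

/-- The two-dimensional algebra `A'` over `K` with nonzero basis products
`e'₁e'₁ = e'₁ = e'₂e'₂`, `e'₁e'₂ = e'₂ = e'₂e'₁`, realized on `Fin 2 → K`. -/
def mulA' (K : Type*) [Field K] (x y : Fin 2 → K) : Fin 2 → K :=
  ![x 0 * y 0 + x 1 * y 1, x 0 * y 1 + x 1 * y 0]

theorem mul_symm_eq_zero_of_isotopy {R M M' : Type*} [Semiring R] [AddCommMonoid M]
    [AddCommMonoid M'] [Module R M] [Module R M'] {mul : M → M → M} {mul' : M' → M' → M'}
    (f g h : M ≃ₗ[R] M') (hfgh : ∀ x y, mul' (f x) (g y) = h (mul x y)) {a b : M'}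
    (hab : mul' a b = 0) : mul (f.symm a) (g.symm b) = 0 :=
  h.map_eq_zero_iff.mp (by rw [← hfgh, f.apply_symm_apply, g.apply_symm_apply, hab])

def shear (R : Type*) [CommRing R] : (Fin 2 → R) ≃ₗ[R] (Fin 2 → R) where
  toFun x := ![x 0 + x 1, x 1]
  invFun x := ![x 0 - x 1, x 1]
  map_add' x y := by ext i; fin_cases i <;> simp [add_add_add_comm]
  map_smul' c x := by ext i; fin_cases i <;> simp [mul_add]
  left_inv x := by ext i; fin_cases i <;> simp
  right_inv x := by ext i; fin_cases i <;> simp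

section

variable {K : Type*} [Field K]

theorem apply_zero_eq_zero_of_mulA_eq_zero {u w : Fin 2 → K} (hw : w ≠ 0)
    (huw : mulA K u w = 0) : u 0 = 0 := by
  have h0 : u 0 * w 0 = 0 := congrFun huw 0
  have h1 : u 0 * w 1 + u 1 * w 0 = 0 := congrFun huw 1
  by_contra hu
  have hw0 : w 0 = 0 := (mul_eq_zero.mp h0).resolve_left hu
  have hw1 : w 1 = 0 := by simpa [hw0, hu] using h1
  exact hw (funext (Fin.forall_fin_two.mpr ⟨hw0, hw1⟩))

theorem not_linearIndependent_of_apply_zero_eq_zero {u v : Fin 2 → K} (hu : u 0 = 0)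
    (hv : v 0 = 0) : ¬LinearIndependent K ![u, v] := by
  rw [LinearIndependent.pair_iff]
  intro hind
  by_cases hu1 : u 1 = 0
  · have : u = 0 := funext (Fin.forall_fin_two.mpr ⟨hu, hu1⟩)
    simpa [this] using hind 1 0
  · refine hu1 (neg_eq_zero.mp (hind (v 1) (-u 1) ?_).2)
    ext i; fin_cases i <;> simp [hu, hv]; ring

theorem linearIndependent_one_one_one_neg_one (h2 : (2 : K) ≠ 0) :
    LinearIndependent K ![![(1 : K), 1], ![1, -1]] := by
  rw [LinearIndependent.pair_iff]
  intro s t hst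
  have h0 : s + t = 0 := by simpa using congrFun hst 0
  have h1 : s - t = 0 := by simpa [sub_eq_add_neg] using congrFun hst 1
  have hs : s = 0 := (mul_eq_zero.mp (by linear_combination h0 + h1 : 2 * s = 0)).resolve_left h2
  exact ⟨hs, by simpa [hs] using h0⟩

theorem mulA'_one_one_one_neg_one : mulA' K ![1, 1] ![1, -1] = 0 := by
  ext i; fin_cases i <;> simp [mulA']

theorem mulA'_one_neg_one_one_one : mulA' K ![1, -1] ![1, 1] = 0 := by
  ext i; fin_cases i <;> simp [mulA']

theorem mulA'_shear (h2 : (2 : K) = 0) (x y : Fin 2 → K) :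
    mulA' K (shear K x) (shear K y) = shear K (mulA K x y) := by
  ext i; fin_cases i <;> simp [shear, mulA, mulA'] <;> linear_combination x 1 * y 1 * h2

end

theorem stmt_18 (K : Type*) [Field K] :
    (ringChar K = 2 → ∃ f : (Fin 2 → K) ≃ₗ[K] (Fin 2 → K),
        f (Pi.single 0 1) = Pi.single 0 1 ∧
        f (Pi.single 1 1) = Pi.single 0 1 + Pi.single 1 1 ∧
        ∀ x y : Fin 2 → K, mulA' K (f x) (f y) = f (mulA K x y)) ∧
    (ringChar K ≠ 2 → ¬ ∃ f g h : (Fin 2 → K) ≃ₗ[K] (Fin 2 → K),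
        ∀ x y : Fin 2 → K, mulA' K (f x) (g y) = h (mulA K x y)) := by
  refine ⟨fun hchar => ?_, fun hchar => ?_⟩
  · have : CharP K 2 := ringChar.of_eq hchar
    refine ⟨shear K, ?_, ?_, mulA'_shear CharTwo.two_eq_zero⟩ <;>
      ext i <;> fin_cases i <;> simp [shear]
  · rintro ⟨f, g, h, hfgh⟩
    have hu := apply_zero_eq_zero_of_mulA_eq_zero (by simp)
      (mul_symm_eq_zero_of_isotopy f g h hfgh mulA'_one_one_one_neg_one)
    have hv := apply_zero_eq_zero_of_mulA_eq_zero (by simp)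
      (mul_symm_eq_zero_of_isotopy f g h hfgh mulA'_one_neg_one_one_one)
    refine not_linearIndependent_of_apply_zero_eq_zero hu hv
      (.of_comp f.toLinearMap ?_)
    convert linearIndependent_one_one_one_neg_one (Ring.two_ne_zero hchar)
    ext i; fin_cases i <;> simp
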